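/- arXiv:2506.01522 — 6 statements merged into one kernel-verified Lean document; each statement's English description precedes it below -/
import Mathlib

section
/- Let (X, 𝒜) and (Z, ℬ) be standard Borel measurable spaces, let qX and pX be probability measures on X, and let qZX, pZX : X → Measure Z be Markov kernels. Then the Kullback–Leibler divergence between the joint measures satisfies the chain rule: KL(qX ⊗ qZX ‖ pX ⊗ pZX) = KL(qX ‖ pX) + ∫ KL(qZX(x) ‖ pZX(x)) dqX(x). -/
open MeasureTheory ProbabilityTheory
open scoped ENNReal

open Classical in
/-- Kullback–Leibler divergence: `∫ log (dμ/dν) dμ` when `μ ≪ ν` and the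
log-likelihood ratio is integrable, `+∞` otherwise. -/
noncomputable def klDiv {α : Type*} [MeasurableSpace α] (μ ν : Measure α) : EReal :=
  if μ ≪ ν ∧ Integrable (llr μ ν) μ then ((∫ x, llr μ ν x ∂μ : ℝ) : EReal) else ⊤

open Classical in
/-- The canonical map from `EReal` to `ℝ≥0∞`, sending `⊤` to `⊤` and truncating
negative values to `0` (KL divergences of probability measures are nonnegative,
so no information is lost here). -/
noncomputable def erealToENNReal (x : EReal) : ℝ≥0∞ :=
  if x = ⊤ then ⊤ else ENNReal.ofReal x.toReal

namespace KLChainAux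

open Real

/-! ### The convex function `φ(u) = u log u - u + 1` -/

noncomputable def phi (u : ℝ) : ℝ := u * Real.log u - u + 1

lemma phi_zero : phi 0 = 1 := by simp [phi]

lemma phi_nonneg {u : ℝ} (hu : 0 ≤ u) : 0 ≤ phi u := by
  rcases eq_or_lt_of_le hu with h | h
  · simp [phi, ← h]
  · have hlog : Real.log u⁻¹ ≤ u⁻¹ - 1 := Real.log_le_sub_one_of_pos (by positivity)
    rw [Real.log_inv] at hlog
    have h1 : 1 - u⁻¹ ≤ Real.log u := by linarith
    have h2 : u * (1 - u⁻¹) ≤ u * Real.log u := by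
      exact mul_le_mul_of_nonneg_left h1 h.le
    have h3 : u * (1 - u⁻¹) = u - 1 := by field_simp
    simp only [phi]; nlinarith

lemma measurable_phi : Measurable phi :=
  ((measurable_id.mul Real.measurable_log).sub measurable_id).add measurable_const

/-- Key algebraic identity: `φ(a t) = t φ(a) + a φ(t) + (a-1)(t-1)` for `a, t ≥ 0`. -/
lemma phi_mul {a t : ℝ} (ha : 0 ≤ a) (ht : 0 ≤ t) :
    phi (a * t) = t * phi a + a * phi t + (a - 1) * (t - 1) := by
  rcases eq_or_lt_of_le ha with h | h
  · rw [← h, zero_mul, phi_zero]; ring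
  rcases eq_or_lt_of_le ht with h' | h'
  · rw [← h', mul_zero, phi_zero]; ring
  simp only [phi]
  rw [Real.log_mul h.ne' h'.ne']
  ring

/-! ### A positive representation of KL -/

variable {α : Type*} [MeasurableSpace α]

/-- `∫⁻ φ(dμ/dν) dν`, an `ℝ≥0∞`-valued version of the KL divergence for `μ ≪ ν`. -/
noncomputable def EKL (μ ν : Measure α) : ℝ≥0∞ :=
  ∫⁻ x, ENNReal.ofReal (phi ((μ.rnDeriv ν x).toReal)) ∂ν

lemma EKL_def (μ ν : Measure α) :
    EKL μ ν = ∫⁻ x, ENNReal.ofReal (phi ((μ.rnDeriv ν x).toReal)) ∂ν := rfl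

lemma integrable_phi_iff {μ ν : Measure α} [IsProbabilityMeasure μ] [IsProbabilityMeasure ν]
    (h : μ ≪ ν) :
    Integrable (fun x => phi ((μ.rnDeriv ν x).toReal)) ν ↔ Integrable (llr μ ν) μ := by
  have hgt : Integrable (fun x => (μ.rnDeriv ν x).toReal) ν :=
    Measure.integrable_toReal_rnDeriv
  have hmul : Integrable (fun x => (μ.rnDeriv ν x).toReal * Real.log ((μ.rnDeriv ν x).toReal)) ν
      ↔ Integrable (llr μ ν) μ := by
    rw [← integrable_rnDeriv_smul_iff h]
    simp only [smul_eq_mul, llr_def]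
  rw [← hmul]
  constructor
  · intro hint
    have : (fun x => (μ.rnDeriv ν x).toReal * Real.log ((μ.rnDeriv ν x).toReal))
        = fun x => phi ((μ.rnDeriv ν x).toReal) + ((μ.rnDeriv ν x).toReal - 1) := by
      funext x; simp only [phi]; ring
    rw [this]
    exact hint.add (hgt.sub (integrable_const 1))
  · intro hint
    have : (fun x => phi ((μ.rnDeriv ν x).toReal))
        = fun x => (μ.rnDeriv ν x).toReal * Real.log ((μ.rnDeriv ν x).toReal)
          - ((μ.rnDeriv ν x).toReal - 1) := by
      funext x; simp only [phi]; ring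
    rw [this]
    exact hint.sub (hgt.sub (integrable_const 1))

lemma klDiv_eq_EKL {μ ν : Measure α} [IsProbabilityMeasure μ] [IsProbabilityMeasure ν]
    (h : μ ≪ ν) : klDiv μ ν = (EKL μ ν : EReal) := by
  by_cases hint : Integrable (llr μ ν) μ
  · rw [klDiv, if_pos ⟨h, hint⟩]
    have hphi_int : Integrable (fun x => phi ((μ.rnDeriv ν x).toReal)) ν :=
      (integrable_phi_iff h).2 hint
    have hEKL : EKL μ ν = ENNReal.ofReal (∫ x, phi ((μ.rnDeriv ν x).toReal) ∂ν) :=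
      (ofReal_integral_eq_lintegral_ofReal hphi_int
        (Filter.Eventually.of_forall fun x => phi_nonneg ENNReal.toReal_nonneg)).symm
    have hval : ∫ x, phi ((μ.rnDeriv ν x).toReal) ∂ν = ∫ x, llr μ ν x ∂μ := by
      have hpt : (fun x => phi ((μ.rnDeriv ν x).toReal))
          = fun x => (μ.rnDeriv ν x).toReal • llr μ ν x - ((μ.rnDeriv ν x).toReal - 1) := by
        funext x; simp only [phi, llr, smul_eq_mul]; ring
      have h1 : Integrable (fun x => (μ.rnDeriv ν x).toReal • llr μ ν x) ν :=
        (integrable_rnDeriv_smul_iff h).2 hint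
      have h2 : Integrable (fun x => (μ.rnDeriv ν x).toReal - 1) ν :=
        Measure.integrable_toReal_rnDeriv.sub (integrable_const 1)
      rw [hpt, integral_sub h1 h2, integral_rnDeriv_smul h,
        integral_sub Measure.integrable_toReal_rnDeriv (integrable_const 1),
        Measure.integral_toReal_rnDeriv h]
      simp
    have hnonneg : 0 ≤ ∫ x, phi ((μ.rnDeriv ν x).toReal) ∂ν :=
      integral_nonneg fun x => phi_nonneg ENNReal.toReal_nonneg
    rw [hEKL, EReal.coe_ennreal_ofReal, max_eq_left hnonneg, hval]
  · rw [klDiv, if_neg (fun hc => hint hc.2)]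
    suffices hEKL : EKL μ ν = ⊤ by rw [hEKL, EReal.coe_ennreal_top]
    by_contra hne
    refine hint ((integrable_phi_iff h).1 ?_)
    refine ⟨(measurable_phi.comp ((μ.measurable_rnDeriv ν).ennreal_toReal)).aestronglyMeasurable,
      ?_⟩
    rw [hasFiniteIntegral_iff_ofReal
      (Filter.Eventually.of_forall fun x => phi_nonneg ENNReal.toReal_nonneg)]
    exact lt_top_iff_ne_top.2 hne

lemma erealToENNReal_coe (x : ℝ≥0∞) : erealToENNReal (x : EReal) = x := by
  rcases eq_or_ne x ⊤ with rfl | hx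
  · simp [erealToENNReal]
  · rw [erealToENNReal, if_neg (by simpa [EReal.coe_ennreal_eq_top_iff] using hx),
      EReal.toReal_coe_ennreal]
    exact ENNReal.ofReal_toReal hx

lemma erealToENNReal_klDiv {μ ν : Measure α} [IsProbabilityMeasure μ] [IsProbabilityMeasure ν]
    (h : μ ≪ ν) : erealToENNReal (klDiv μ ν) = EKL μ ν := by
  rw [klDiv_eq_EKL h, erealToENNReal_coe]

lemma klDiv_ne_bot (μ ν : Measure α) : klDiv μ ν ≠ ⊥ := by
  rw [klDiv]
  split
  · exact EReal.coe_ne_bot _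
  · exact (by simp : (⊤ : EReal) ≠ ⊥)

/-! ### Conditional identity -/

lemma lintegral_phi_mul {Z : Type*} [MeasurableSpace Z] {b β : Measure Z}
    [IsProbabilityMeasure b] [IsProbabilityMeasure β] (hb : b ≪ β) {a : ℝ} (ha : 0 ≤ a) :
    ∫⁻ z, ENNReal.ofReal (phi (a * (b.rnDeriv β z).toReal)) ∂β
      = ENNReal.ofReal (phi a)
        + ENNReal.ofReal a * ∫⁻ z, ENNReal.ofReal (phi ((b.rnDeriv β z).toReal)) ∂β := by
  set h : Z → ℝ := fun z => (b.rnDeriv β z).toReal with hh_def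
  have hh_meas : Measurable h := (b.measurable_rnDeriv β).ennreal_toReal
  have hh_nonneg : ∀ z, 0 ≤ h z := fun z => ENNReal.toReal_nonneg
  have hh_int : Integrable h β := Measure.integrable_toReal_rnDeriv
  have hh_int1 : ∫ z, h z ∂β = 1 := by
    rw [hh_def, Measure.integral_toReal_rnDeriv hb]; simp
  rcases eq_or_lt_of_le ha with rfl | hapos
  · simp only [zero_mul, phi_zero, lintegral_const, measure_univ, mul_one,
      ENNReal.ofReal_zero]
    simp [phi_zero]
  by_cases hI : ∫⁻ z, ENNReal.ofReal (phi (h z)) ∂β = ⊤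
  · rw [hI, ENNReal.mul_top (by simpa using hapos)]
    rw [add_top]
    -- show LHS = ⊤ using `a φ(t) ≤ φ(a t) + (a+1)(t+1)`
    by_contra hne
    have hbound : ∀ z, ENNReal.ofReal a * ENNReal.ofReal (phi (h z))
        ≤ ENNReal.ofReal (phi (a * h z)) + ENNReal.ofReal ((a + 1) * (h z + 1)) := by
      intro z
      rw [← ENNReal.ofReal_mul ha, ← ENNReal.ofReal_add (phi_nonneg (by positivity))
        (by nlinarith [hh_nonneg z])]
      apply ENNReal.ofReal_le_ofReal
      have hid := phi_mul ha (hh_nonneg z)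
      nlinarith [hh_nonneg z, phi_nonneg ha, hh_nonneg z, phi_nonneg (hh_nonneg z)]
    have hfin2 : ∫⁻ z, ENNReal.ofReal ((a + 1) * (h z + 1)) ∂β ≠ ⊤ := by
      have : ∀ z, ENNReal.ofReal ((a + 1) * (h z + 1))
          = ENNReal.ofReal (a + 1) * (ENNReal.ofReal (h z) + 1) := by
        intro z
        rw [ENNReal.ofReal_mul (by linarith), ENNReal.ofReal_add (hh_nonneg z) zero_le_one]
        simp
      simp_rw [this]
      rw [lintegral_const_mul _ (f := fun z => ENNReal.ofReal (h z) + 1) ((hh_meas.ennreal_ofReal).add measurable_const)]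
      have h2 : ∫⁻ z, (ENNReal.ofReal (h z) + 1) ∂β = 2 := by
        rw [lintegral_add_right _ measurable_const, lintegral_const]
        have : ∫⁻ z, ENNReal.ofReal (h z) ∂β = 1 := by
          have hcongr : ∫⁻ z, ENNReal.ofReal (h z) ∂β = ∫⁻ z, b.rnDeriv β z ∂β := by
            refine lintegral_congr_ae ((b.rnDeriv_ne_top β).mono fun z hz => ?_)
            simp [hh_def, ENNReal.ofReal_toReal hz]
          rw [hcongr, Measure.lintegral_rnDeriv hb]
          simp
        rw [this]; simp; norm_num
      rw [h2]
      exact ENNReal.mul_ne_top ENNReal.ofReal_ne_top (by norm_num)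
    have htop : (⊤ : ℝ≥0∞) ≤ ∫⁻ z, ENNReal.ofReal (phi (a * h z)) ∂β
        + ∫⁻ z, ENNReal.ofReal ((a + 1) * (h z + 1)) ∂β := by
      calc (⊤ : ℝ≥0∞) = ENNReal.ofReal a * ∫⁻ z, ENNReal.ofReal (phi (h z)) ∂β := by
            rw [hI, ENNReal.mul_top (by simpa using hapos)]
        _ = ∫⁻ z, ENNReal.ofReal a * ENNReal.ofReal (phi (h z)) ∂β :=
            (lintegral_const_mul _ (measurable_phi.comp hh_meas).ennreal_ofReal).symm
        _ ≤ ∫⁻ z, (ENNReal.ofReal (phi (a * h z)) + ENNReal.ofReal ((a + 1) * (h z + 1))) ∂β :=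
            lintegral_mono hbound
        _ = _ := lintegral_add_left (measurable_phi.comp
            (measurable_const.mul hh_meas)).ennreal_ofReal _
    rw [top_le_iff] at htop
    exact hne (by
      rcases ENNReal.add_eq_top.1 htop with h' | h'
      · exact h'
      · exact absurd h' hfin2)
  · -- finite case: compute with Bochner integrals
    have hphi_int : Integrable (fun z => phi (h z)) β := by
      refine ⟨(measurable_phi.comp hh_meas).aestronglyMeasurable, ?_⟩
      rw [hasFiniteIntegral_iff_ofReal
        (Filter.Eventually.of_forall fun z => phi_nonneg (hh_nonneg z))]
      exact lt_top_iff_ne_top.2 hI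
    have hpt : (fun z => phi (a * h z))
        = fun z => (phi a) * h z + a * phi (h z) + (a - 1) * (h z - 1) := by
      funext z
      rw [phi_mul ha (hh_nonneg z)]; ring
    have hC : Integrable (fun z => h z - 1) β := hh_int.sub (integrable_const 1)
    have hA1 : Integrable (fun z => phi a * h z) β := hh_int.const_mul _
    have hA2 : Integrable (fun z => a * phi (h z)) β := hphi_int.const_mul _
    have hA : Integrable (fun z => phi a * h z + a * phi (h z)) β := hA1.add hA2
    have hB : Integrable (fun z => (a - 1) * (h z - 1)) β := hC.const_mul _
    have hint : Integrable (fun z => phi (a * h z)) β := by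
      rw [hpt]
      exact hA.add hB
    have hval : ∫ z, phi (a * h z) ∂β = phi a + a * ∫ z, phi (h z) ∂β := by
      rw [hpt, integral_add hA hB, integral_add hA1 hA2,
        integral_const_mul, integral_const_mul, integral_const_mul,
        integral_sub hh_int (integrable_const 1), hh_int1]
      simp
    rw [← ofReal_integral_eq_lintegral_ofReal hint
        (Filter.Eventually.of_forall fun z => phi_nonneg (by positivity)),
      ← ofReal_integral_eq_lintegral_ofReal hphi_int
        (Filter.Eventually.of_forall fun z => phi_nonneg (hh_nonneg z)),
      hval, ENNReal.ofReal_add (phi_nonneg ha), ENNReal.ofReal_mul ha]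
    have : 0 ≤ ∫ z, phi (h z) ∂β :=
      integral_nonneg fun z => phi_nonneg (hh_nonneg z)
    positivity

/-! ### Radon–Nikodym derivative of a composition-product -/

variable {X Z : Type*} [MeasurableSpace X] [MeasurableSpace Z]

lemma compProd_withDensity (ν : Measure X) [IsFiniteMeasure ν] (η : Kernel X Z)
    [IsFiniteKernel η] {g : X → ℝ≥0∞} (hg : Measurable g) {h : X → Z → ℝ≥0∞}
    (hh : Measurable (Function.uncurry h)) [IsSFiniteKernel (η.withDensity h)] :
    (ν.withDensity g) ⊗ₘ (η.withDensity h)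
      = (ν ⊗ₘ η).withDensity (fun p => g p.1 * h p.1 p.2) := by
  have hgh : Measurable (fun p : X × Z => g p.1 * h p.1 p.2) :=
    (hg.comp measurable_fst).mul hh
  ext s hs
  rw [Measure.compProd_apply hs, withDensity_apply _ hs,
    ← lintegral_indicator hs, Measure.lintegral_compProd (hgh.indicator hs),
    lintegral_withDensity_eq_lintegral_mul ν hg
      (Kernel.measurable_kernel_prodMk_left hs)]
  refine lintegral_congr fun x => ?_
  simp only [Pi.mul_apply]
  have hslice : (fun z => s.indicator (fun p : X × Z => g p.1 * h p.1 p.2) (x, z))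
      = (Prod.mk x ⁻¹' s).indicator (fun z => g x * h x z) := by
    funext z
    by_cases hz : (x, z) ∈ s <;> simp [Set.indicator, hz]
  have hhx : Measurable (h x) := hh.of_uncurry_left
  rw [hslice, lintegral_indicator (measurable_prodMk_left hs),
    Kernel.withDensity_apply' _ hh, lintegral_const_mul _ hhx]

lemma compProd_mutuallySingular_left {μ1 ν1 : Measure X} [SFinite μ1] [SFinite ν1]
    (h : μ1 ⟂ₘ ν1) (κ η : Kernel X Z) [IsSFiniteKernel κ] [IsSFiniteKernel η] :
    μ1 ⊗ₘ κ ⟂ₘ ν1 ⊗ₘ η := by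
  obtain ⟨s, hsm, hs1, hs2⟩ := h
  refine ⟨s ×ˢ Set.univ, hsm.prod MeasurableSet.univ, ?_, ?_⟩
  · rw [Measure.compProd_apply_prod hsm MeasurableSet.univ]
    exact setLIntegral_measure_zero _ _ hs1
  · have hcompl : (s ×ˢ (Set.univ : Set Z))ᶜ = sᶜ ×ˢ Set.univ := by
      ext p; simp
    rw [hcompl, Measure.compProd_apply_prod hsm.compl MeasurableSet.univ]
    exact setLIntegral_measure_zero _ _ hs2

lemma compProd_singularPart_right [MeasurableSpace.CountablyGenerated Z]
    {ν' ν : Measure X} [SFinite ν'] [SFinite ν] (hν' : ν' ≪ ν)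
    (κ η : Kernel X Z) [IsFiniteKernel κ] [IsFiniteKernel η] :
    ν' ⊗ₘ (κ.singularPart η) ⟂ₘ ν ⊗ₘ η := by
  refine ⟨(Kernel.mutuallySingularSet κ η)ᶜ,
    (Kernel.measurableSet_mutuallySingularSet κ η).compl, ?_, ?_⟩
  · rw [Measure.compProd_apply (Kernel.measurableSet_mutuallySingularSet κ η).compl]
    have h00 : ∀ x, (κ.singularPart η) x ((Prod.mk x ⁻¹' Kernel.mutuallySingularSet κ η)ᶜ) = 0 :=
      fun x => Kernel.singularPart_compl_mutuallySingularSetSlice κ η x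
    simp only [Set.preimage_compl]
    simp [h00]
  · rw [compl_compl,
      Measure.compProd_apply (Kernel.measurableSet_mutuallySingularSet κ η)]
    have : ∀ x, η x (Prod.mk x ⁻¹' Kernel.mutuallySingularSet κ η) = 0 := by
      intro x
      have hpre : Prod.mk x ⁻¹' Kernel.mutuallySingularSet κ η
          = Kernel.mutuallySingularSetSlice κ η x := rfl
      rw [hpre]
      exact Kernel.measure_mutuallySingularSetSlice κ η x
    simp [this]

lemma rnDeriv_compProd [MeasurableSpace.CountablyGenerated Z]
    {μ ν : Measure X} [IsFiniteMeasure μ] [IsFiniteMeasure ν]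
    {κ η : Kernel X Z} [IsFiniteKernel κ] [IsFiniteKernel η] :
    (fun p => μ.rnDeriv ν p.1 * Kernel.rnDeriv κ η p.1 p.2)
      =ᵐ[ν ⊗ₘ η] (μ ⊗ₘ κ).rnDeriv (ν ⊗ₘ η) := by
  have hmeas : Measurable (fun p : X × Z => μ.rnDeriv ν p.1 * Kernel.rnDeriv κ η p.1 p.2) :=
    ((μ.measurable_rnDeriv ν).comp measurable_fst).mul (Kernel.measurable_rnDeriv κ η)
  have hdecomp : μ ⊗ₘ κ
      = (μ.singularPart ν ⊗ₘ κ + (ν.withDensity (μ.rnDeriv ν)) ⊗ₘ (κ.singularPart η))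
        + (ν ⊗ₘ η).withDensity (fun p => μ.rnDeriv ν p.1 * Kernel.rnDeriv κ η p.1 p.2) := by
    conv_lhs => rw [μ.haveLebesgueDecomposition_add ν, Measure.compProd_add_left]
    have hκ : (ν.withDensity (μ.rnDeriv ν)) ⊗ₘ κ
        = (ν.withDensity (μ.rnDeriv ν)) ⊗ₘ (η.withDensity (Kernel.rnDeriv κ η))
          + (ν.withDensity (μ.rnDeriv ν)) ⊗ₘ (κ.singularPart η) := by
      rw [← Measure.compProd_add_right, Kernel.rnDeriv_add_singularPart]
    rw [hκ, compProd_withDensity ν η (μ.measurable_rnDeriv ν) (Kernel.measurable_rnDeriv κ η)]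
    abel
  have hsing : (μ.singularPart ν ⊗ₘ κ + (ν.withDensity (μ.rnDeriv ν)) ⊗ₘ (κ.singularPart η))
      ⟂ₘ (ν ⊗ₘ η) :=
    (compProd_mutuallySingular_left (μ.mutuallySingular_singularPart ν) κ η).add_left
      (compProd_singularPart_right (withDensity_absolutelyContinuous ν _) κ η)
  exact Measure.eq_rnDeriv hmeas hsing hdecomp

lemma ae_ac_of_ac_compProd [MeasurableSpace.CountablyGenerated Z]
    {μ ν : Measure X} [SFinite μ] [SFinite ν] {κ η : Kernel X Z}
    [IsFiniteKernel κ] [IsFiniteKernel η] (h : μ ⊗ₘ κ ≪ ν ⊗ₘ η) :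
    ∀ᵐ x ∂μ, κ x ≪ η x := by
  have hN := Kernel.measurableSet_mutuallySingularSet κ η
  have h0 : (ν ⊗ₘ η) (Kernel.mutuallySingularSet κ η) = 0 := by
    rw [Measure.compProd_apply hN]
    have : ∀ x, η x (Prod.mk x ⁻¹' Kernel.mutuallySingularSet κ η) = 0 := fun x =>
      Kernel.measure_mutuallySingularSetSlice κ η x
    simp [this]
  have h1 : (μ ⊗ₘ κ) (Kernel.mutuallySingularSet κ η) = 0 := h h0
  rw [Measure.compProd_apply hN,
    lintegral_eq_zero_iff (Kernel.measurable_kernel_prodMk_left hN)] at h1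
  filter_upwards [h1] with x hx
  rw [← Kernel.singularPart_eq_zero_iff_absolutelyContinuous,
    Kernel.singularPart_eq_zero_iff_measure_eq_zero]
  exact hx

end KLChainAux

open KLChainAux

/-- Chain rule for the Kullback–Leibler divergence: for probability measures `qX, pX`
on a standard Borel space `X` and Markov kernels `qZX, pZX` from `X` to a standard
Borel space `Z`,
`KL(qX ⊗ qZX ‖ pX ⊗ pZX) = KL(qX ‖ pX) + ∫ KL(qZX x ‖ pZX x) dqX(x)`. -/
theorem klDiv_compProd_eq_add
    {X Z : Type*} [MeasurableSpace X] [StandardBorelSpace X]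
    [MeasurableSpace Z] [StandardBorelSpace Z]
    (qX pX : Measure X) [IsProbabilityMeasure qX] [IsProbabilityMeasure pX]
    (qZX pZX : Kernel X Z) [IsMarkovKernel qZX] [IsMarkovKernel pZX] :
    klDiv (qX ⊗ₘ qZX) (pX ⊗ₘ pZX)
      = klDiv qX pX
        + ((∫⁻ x, erealToENNReal (klDiv (qZX x) (pZX x)) ∂qX : ℝ≥0∞) : EReal) := by
  set μ := qX; set ν := pX; set κ := qZX; set η := pZX
  by_cases hcase : μ ≪ ν ∧ ∀ᵐ x ∂μ, κ x ≪ η x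
  · obtain ⟨hμν, hae⟩ := hcase
    have hjoint : μ ⊗ₘ κ ≪ ν ⊗ₘ η := Measure.AbsolutelyContinuous.compProd hμν hae
    have hd1_meas : Measurable (μ.rnDeriv ν) := μ.measurable_rnDeriv ν
    have hd2_meas : Measurable (Function.uncurry (Kernel.rnDeriv κ η)) :=
      Kernel.measurable_rnDeriv κ η
    have hF_meas : Measurable (fun p : X × Z =>
        ENNReal.ofReal (phi ((μ.rnDeriv ν p.1).toReal * (Kernel.rnDeriv κ η p.1 p.2).toReal))) :=
      (measurable_phi.comp (((hd1_meas.comp measurable_fst).ennreal_toReal).mul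
        ((hd2_meas.ennreal_toReal : Measurable fun p : X × Z =>
          (Kernel.rnDeriv κ η p.1 p.2).toReal)))).ennreal_ofReal
    -- Step 1: klDiv joint = EKL joint = ∫⁻ F
    have hstep1 : klDiv (μ ⊗ₘ κ) (ν ⊗ₘ η)
        = ((∫⁻ p : X × Z, ENNReal.ofReal
              (phi ((μ.rnDeriv ν p.1).toReal * (Kernel.rnDeriv κ η p.1 p.2).toReal)) ∂(ν ⊗ₘ η)
            : ℝ≥0∞) : EReal) := by
      rw [klDiv_eq_EKL hjoint, EKL_def]
      congr 1
      refine lintegral_congr_ae ?_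
      filter_upwards [rnDeriv_compProd (μ := μ) (ν := ν) (κ := κ) (η := η)] with p hp
      rw [← hp, ENNReal.toReal_mul]
    -- a.e. facts over ν
    have hSm : MeasurableSet {x | κ x ≪ η x} :=
      Kernel.measurableSet_absolutelyContinuous κ η
    have hor : ∀ᵐ x ∂ν, μ.rnDeriv ν x = 0 ∨ κ x ≪ η x := by
      have hμS : μ {x | ¬ κ x ≪ η x} = 0 := ae_iff.1 hae
      have h0 : ∫⁻ x in {x | κ x ≪ η x}ᶜ, μ.rnDeriv ν x ∂ν = 0 := by
        rw [Measure.setLIntegral_rnDeriv hμν]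
        exact hμS
      have hz := (lintegral_eq_zero_iff hd1_meas).1 h0
      have hz' : ∀ᵐ x ∂(ν.restrict {x | κ x ≪ η x}ᶜ), μ.rnDeriv ν x = 0 :=
        hz.mono fun x hx => by simpa using hx
      rw [ae_restrict_iff' hSm.compl] at hz'
      filter_upwards [hz'] with x hx
      by_cases hac : κ x ≪ η x
      · exact Or.inr hac
      · exact Or.inl (hx hac)
    have hne_top : ∀ᵐ x ∂ν, μ.rnDeriv ν x ≠ ⊤ := μ.rnDeriv_ne_top ν
    -- Step 3: inner integral
    have hstep3 : ∀ᵐ x ∂ν,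
        ∫⁻ z, ENNReal.ofReal
            (phi ((μ.rnDeriv ν x).toReal * (Kernel.rnDeriv κ η x z).toReal)) ∂η x
          = ENNReal.ofReal (phi ((μ.rnDeriv ν x).toReal))
            + μ.rnDeriv ν x
              * ∫⁻ z, ENNReal.ofReal (phi ((Kernel.rnDeriv κ η x z).toReal)) ∂η x := by
      filter_upwards [hor, hne_top] with x hx hx_top
      rcases hx with h0 | hac
      · simp [h0, phi_zero]
      · have hcongr1 : ∫⁻ z, ENNReal.ofReal
              (phi ((μ.rnDeriv ν x).toReal * (Kernel.rnDeriv κ η x z).toReal)) ∂η x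
            = ∫⁻ z, ENNReal.ofReal
              (phi ((μ.rnDeriv ν x).toReal * ((κ x).rnDeriv (η x) z).toReal)) ∂η x := by
          refine lintegral_congr_ae ?_
          filter_upwards [Kernel.rnDeriv_eq_rnDeriv_measure (κ := κ) (η := η) (a := x)]
            with z hz
          rw [hz]
        have hcongr2 : ∫⁻ z, ENNReal.ofReal (phi ((Kernel.rnDeriv κ η x z).toReal)) ∂η x
            = ∫⁻ z, ENNReal.ofReal (phi (((κ x).rnDeriv (η x) z).toReal)) ∂η x := by
          refine lintegral_congr_ae ?_
          filter_upwards [Kernel.rnDeriv_eq_rnDeriv_measure (κ := κ) (η := η) (a := x)]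
            with z hz
          rw [hz]
        rw [hcongr1, hcongr2, lintegral_phi_mul hac ENNReal.toReal_nonneg,
          ENNReal.ofReal_toReal hx_top]
    -- measurability of the conditional KL
    have hEKLk_meas : Measurable (fun x =>
        ∫⁻ z, ENNReal.ofReal (phi ((Kernel.rnDeriv κ η x z).toReal)) ∂η x) := by
      refine Measurable.lintegral_kernel_prod_right ?_
      exact (measurable_phi.comp hd2_meas.ennreal_toReal).ennreal_ofReal
    -- Steps 2,3,4,5
    have hstep2 : ∫⁻ p : X × Z, ENNReal.ofReal
          (phi ((μ.rnDeriv ν p.1).toReal * (Kernel.rnDeriv κ η p.1 p.2).toReal)) ∂(ν ⊗ₘ η)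
        = EKL μ ν + ∫⁻ x, (∫⁻ z, ENNReal.ofReal
            (phi ((Kernel.rnDeriv κ η x z).toReal)) ∂η x) ∂μ := by
      have hmeas1 : Measurable (fun x => ENNReal.ofReal (phi ((μ.rnDeriv ν x).toReal))) :=
        (measurable_phi.comp hd1_meas.ennreal_toReal).ennreal_ofReal
      rw [Measure.lintegral_compProd hF_meas, lintegral_congr_ae hstep3,
        lintegral_add_left hmeas1, EKL_def]
      congr 1
      have hμ_eq : ν.withDensity (μ.rnDeriv ν) = μ := Measure.withDensity_rnDeriv_eq μ ν hμν
      conv_rhs => rw [← hμ_eq]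
      rw [lintegral_withDensity_eq_lintegral_mul ν hd1_meas hEKLk_meas]
      rfl
    -- Step 6: rewrite the kernel integral
    have hstep6 : ∫⁻ x, (∫⁻ z, ENNReal.ofReal
          (phi ((Kernel.rnDeriv κ η x z).toReal)) ∂η x) ∂μ
        = ∫⁻ x, erealToENNReal (klDiv (κ x) (η x)) ∂μ := by
      refine lintegral_congr_ae ?_
      filter_upwards [hae] with x hac
      rw [erealToENNReal_klDiv hac, EKL_def]
      refine lintegral_congr_ae ?_
      filter_upwards [Kernel.rnDeriv_eq_rnDeriv_measure (κ := κ) (η := η) (a := x)]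
        with z hz
      rw [hz]
    rw [hstep1, hstep2, hstep6, EReal.coe_ennreal_add, klDiv_eq_EKL hμν]
  · -- degenerate case: both sides are ⊤
    have hRHS : klDiv μ ν + ((∫⁻ x, erealToENNReal (klDiv (κ x) (η x)) ∂μ : ℝ≥0∞) : EReal)
        = ⊤ := by
      by_cases hμν : μ ≪ ν
      · have hae' : ¬ ∀ᵐ x ∂μ, κ x ≪ η x := fun h => hcase ⟨hμν, h⟩
        have hSm : MeasurableSet {x | κ x ≪ η x} :=
          Kernel.measurableSet_absolutelyContinuous κ η
        have hμS : μ {x | ¬ κ x ≪ η x} ≠ 0 := by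
          intro h0
          exact hae' (ae_iff.2 h0)
        have htop : ∫⁻ x, erealToENNReal (klDiv (κ x) (η x)) ∂μ = ⊤ := by
          refine top_le_iff.1 ?_
          calc (⊤ : ℝ≥0∞) = ⊤ * μ {x | ¬ κ x ≪ η x} := by
                rw [ENNReal.top_mul hμS]
            _ = ∫⁻ _ in {x | κ x ≪ η x}ᶜ, ⊤ ∂μ := by
                rw [setLIntegral_const]
                rfl
            _ = ∫⁻ x in {x | κ x ≪ η x}ᶜ, erealToENNReal (klDiv (κ x) (η x)) ∂μ := by
                refine setLIntegral_congr_fun hSm.compl (fun x hx => ?_)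
                have hx' : klDiv (κ x) (η x) = ⊤ := by
                  rw [klDiv, if_neg (fun hc => hx hc.1)]
                rw [hx']
                simp [erealToENNReal]
            _ ≤ _ := setLIntegral_le_lintegral _ _
        rw [htop, EReal.coe_ennreal_top, EReal.add_top_of_ne_bot (klDiv_ne_bot μ ν)]
      · have hklt : klDiv μ ν = ⊤ := by rw [klDiv, if_neg (fun hc => hμν hc.1)]
        rw [hklt, EReal.top_add_of_ne_bot (EReal.coe_ennreal_ne_bot _)]
    rw [hRHS]
    -- LHS = ⊤
    have hnjoint : ¬ (μ ⊗ₘ κ ≪ ν ⊗ₘ η) := by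
      intro hjoint
      haveI : ∀ a, NeZero (κ a) := fun a =>
        ⟨(IsMarkovKernel.isProbabilityMeasure a).ne_zero (κ a)⟩
      exact hcase ⟨Measure.absolutelyContinuous_of_compProd hjoint,
        ae_ac_of_ac_compProd hjoint⟩
    rw [klDiv, if_neg (fun hc => hnjoint hc.1)]
end

section
/- Let (X, 𝒜) and (Z, ℬ) be standard Borel measurable spaces, let qX and pX be probability measures on X, and let qZX, pZX : X → Measure Z be Markov kernels. Then KL(qX ‖ pX) ≤ KL(qX ⊗ qZX ‖ pX ⊗ pZX); that is, the KL divergence between the marginals on X is bounded above by the KL divergence between the joint measures. -/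
open MeasureTheory ProbabilityTheory


lemma my_integral_llr_map_le {α β : Type*} [MeasurableSpace α] [MeasurableSpace β]
    (μ ν : Measure α) [IsProbabilityMeasure μ] [IsProbabilityMeasure ν]
    {f : α → β} (hf : Measurable f) (hac : μ ≪ ν) (hint : Integrable (llr μ ν) μ) :
    Integrable (llr (μ.map f) (ν.map f)) (μ.map f) ∧
      ∫ y, llr (μ.map f) (ν.map f) y ∂(μ.map f) ≤ ∫ x, llr μ ν x ∂μ := by
  haveI : IsProbabilityMeasure (μ.map f) := Measure.isProbabilityMeasure_map hf.aemeasurable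
  haveI : IsProbabilityMeasure (ν.map f) := Measure.isProbabilityMeasure_map hf.aemeasurable
  have hacm : μ.map f ≪ ν.map f := hac.map hf
  set ρ := (μ.map f).rnDeriv (ν.map f) with hρ_def
  have hρ : Measurable ρ := Measure.measurable_rnDeriv _ _
  set r := μ.rnDeriv ν with hr_def
  have hr : Measurable r := Measure.measurable_rnDeriv _ _
  -- a.e. facts
  have hρ_pos : ∀ᵐ x ∂μ, 0 < ρ (f x) :=
    ae_of_ae_map hf.aemeasurable (Measure.rnDeriv_pos hacm)
  have hρ_fin : ∀ᵐ x ∂μ, ρ (f x) < ⊤ :=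
    ae_of_ae_map hf.aemeasurable (hacm.ae_le (Measure.rnDeriv_lt_top _ _))
  have hr_pos : ∀ᵐ x ∂μ, 0 < r x := Measure.rnDeriv_pos hac
  have hr_fin : ∀ᵐ x ∂μ, r x < ⊤ := hac.ae_le (Measure.rnDeriv_lt_top μ ν)
  -- the quotient function
  have hmeasQ : Measurable fun x ↦ ρ (f x) / r x := (hρ.comp hf).div hr
  have hgr : ∫⁻ x, ρ (f x) / r x ∂μ ≤ 1 := by
    conv_lhs => rw [← Measure.withDensity_rnDeriv_eq μ ν hac]
    rw [lintegral_withDensity_eq_lintegral_mul ν hr hmeasQ]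
    calc ∫⁻ x, (r * fun x ↦ ρ (f x) / r x) x ∂ν
        ≤ ∫⁻ x, ρ (f x) ∂ν := by
          refine lintegral_mono fun x ↦ ?_
          simpa using ENNReal.mul_div_le
      _ = ∫⁻ y, ρ y ∂(ν.map f) := (lintegral_map hρ hf).symm
      _ = (μ.map f) Set.univ := Measure.lintegral_rnDeriv hacm
      _ = 1 := measure_univ
  have hQint : Integrable (fun x ↦ (ρ (f x) / r x).toReal) μ :=
    integrable_toReal_of_lintegral_ne_top hmeasQ.aemeasurable
      (lt_of_le_of_lt hgr ENNReal.one_lt_top).ne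
  have hQle : ∫ x, (ρ (f x) / r x).toReal ∂μ ≤ 1 := by
    rw [integral_toReal hmeasQ.aemeasurable
      (ae_lt_top hmeasQ (lt_of_le_of_lt hgr ENNReal.one_lt_top).ne)]
    simpa using ENNReal.toReal_mono (by norm_num) hgr
  -- pointwise bound
  have hb : ∀ᵐ x ∂μ, llr (μ.map f) (ν.map f) (f x)
      ≤ llr μ ν x + ((ρ (f x) / r x).toReal - 1) := by
    filter_upwards [hρ_pos, hρ_fin, hr_pos, hr_fin] with x h1 h2 h3 h4
    have ha : 0 < (ρ (f x)).toReal := ENNReal.toReal_pos h1.ne' h2.ne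
    have hb' : 0 < (r x).toReal := ENNReal.toReal_pos h3.ne' h4.ne
    have hq : (ρ (f x) / r x).toReal = (ρ (f x)).toReal / (r x).toReal :=
      ENNReal.toReal_div _ _
    have hlog : Real.log ((ρ (f x)).toReal / (r x).toReal)
        ≤ (ρ (f x)).toReal / (r x).toReal - 1 :=
      Real.log_le_sub_one_of_pos (div_pos ha hb')
    have : Real.log (ρ (f x)).toReal - Real.log (r x).toReal
        = Real.log ((ρ (f x)).toReal / (r x).toReal) :=
      (Real.log_div ha.ne' hb'.ne').symm
    simp only [llr, hq]
    linarith
  set L := fun x ↦ llr (μ.map f) (ν.map f) (f x) with hL_def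
  have hLmeas : Measurable L := (measurable_llr _ _).comp hf
  set u := fun x ↦ llr μ ν x + ((ρ (f x) / r x).toReal - 1) with hu_def
  have hu_int : Integrable u μ := by
    have hQ1 : Integrable (fun x ↦ (ρ (f x) / r x).toReal - 1) μ := by
      exact hQint.sub (integrable_const 1)
    exact hint.add hQ1
  -- positive part integrable
  have h_pos_int : Integrable (fun x ↦ max (L x) 0) μ := by
    refine hu_int.mono (hLmeas.max measurable_const).aestronglyMeasurable ?_
    filter_upwards [hb] with x hx
    rw [Real.norm_of_nonneg (le_max_right _ _)]
    calc max (L x) 0 ≤ max (u x) 0 := max_le_max hx le_rfl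
      _ ≤ ‖u x‖ := by rw [Real.norm_eq_abs]; exact max_le (le_abs_self _) (abs_nonneg _)
  -- negative part integrable
  have h_exp_int : Integrable (fun x ↦ Real.exp (-(L x))) μ := by
    have h1 : Integrable (fun y ↦ Real.exp (- llr (μ.map f) (ν.map f) y)) (μ.map f) := by
      refine Integrable.congr ?_ (exp_neg_llr hacm).symm
      exact Measure.integrable_toReal_rnDeriv
    exact (integrable_map_measure h1.aestronglyMeasurable hf.aemeasurable).mp h1
  have h_neg_int : Integrable (fun x ↦ min (L x) 0) μ := by
    refine h_exp_int.mono (hLmeas.min measurable_const).aestronglyMeasurable ?_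
    refine Filter.Eventually.of_forall fun x ↦ ?_
    rw [Real.norm_eq_abs, abs_of_nonpos (min_le_right _ _), Real.norm_of_nonneg (Real.exp_pos _).le]
    rcases le_total (L x) 0 with h | h
    · rw [min_eq_left h]
      exact le_trans (by linarith [Real.add_one_le_exp (-(L x))]) le_rfl
    · rw [min_eq_right h]; simpa using (Real.exp_pos _).le
  have hLint : Integrable L μ := by
    have : L = (fun x ↦ max (L x) 0) + fun x ↦ min (L x) 0 := by
      ext x; simp [max_add_min]
    rw [this]; exact h_pos_int.add h_neg_int
  constructor
  · exact (integrable_map_measure (stronglyMeasurable_llr _ _).aestronglyMeasurable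
      hf.aemeasurable).mpr hLint
  · rw [integral_map hf.aemeasurable (stronglyMeasurable_llr _ _).aestronglyMeasurable]
    calc ∫ x, L x ∂μ ≤ ∫ x, u x ∂μ := integral_mono_ae hLint hu_int hb
      _ = ∫ x, llr μ ν x ∂μ + (∫ x, (ρ (f x) / r x).toReal ∂μ - 1) := by
          have hQ1 : Integrable (fun x ↦ (ρ (f x) / r x).toReal - 1) μ := by
            exact hQint.sub (integrable_const 1)
          rw [integral_add hint hQ1, integral_sub hQint (integrable_const 1)]
          simp
      _ ≤ ∫ x, llr μ ν x ∂μ := by linarith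



/-- The KL divergence between the marginals is bounded by the KL divergence between
the joint measures: `KL(qX ‖ pX) ≤ KL(qX ⊗ qZX ‖ pX ⊗ pZX)`. -/
theorem klDiv_le_klDiv_compProd
    {X Z : Type*} [MeasurableSpace X] [StandardBorelSpace X]
    [MeasurableSpace Z] [StandardBorelSpace Z]
    (qX pX : Measure X) [IsProbabilityMeasure qX] [IsProbabilityMeasure pX]
    (qZX pZX : Kernel X Z) [IsMarkovKernel qZX] [IsMarkovKernel pZX] :
    klDiv qX pX ≤ klDiv (qX ⊗ₘ qZX) (pX ⊗ₘ pZX) := by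
  unfold klDiv
  by_cases hj : (qX ⊗ₘ qZX) ≪ (pX ⊗ₘ pZX) ∧ Integrable (llr (qX ⊗ₘ qZX) (pX ⊗ₘ pZX)) (qX ⊗ₘ qZX)
  · obtain ⟨hac, hint⟩ := hj
    have hq : (qX ⊗ₘ qZX).map Prod.fst = qX := Measure.fst_compProd qX qZX
    have hp : (pX ⊗ₘ pZX).map Prod.fst = pX := Measure.fst_compProd pX pZX
    have key := my_integral_llr_map_le (qX ⊗ₘ qZX) (pX ⊗ₘ pZX) measurable_fst hac hint
    rw [hq, hp] at key
    have hacX : qX ≪ pX := by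
      rw [← hq, ← hp]; exact hac.map measurable_fst
    rw [if_pos ⟨hacX, key.1⟩, if_pos ⟨hac, hint⟩]
    exact EReal.coe_le_coe_iff.mpr key.2
  · rw [if_neg hj]
    exact le_top
end

section
/- Let U ⊆ ℝ^d be open and for each i ∈ {1, …, d} let H_i : U → ℝ be a continuously differentiable function with H_i(x) > 0 for all x ∈ U. Define the vector fields e_i : U → ℝ^d by e_i(x) = H_i(x)⁻¹ • b_i, where b_i is the i-th standard basis vector of ℝ^d. Then for every x ∈ U and every pair i ≠ j, the Lie bracket of vector fields satisfies [e_i, e_j](x) ∈ span{e_i(x), e_j(x)}. (This is the key computation in the direction 'orthogonal coordinates exist ⟹ eigen-line fields are involutive' of the paper's Theorem 2: in coordinates where the pull-back metric is diagonal, Σ_i H_i²(u)(du^i)², the orthonormal frame e_i = H_i^{−1} ∂_i is involutive.) -/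
/-- Lie bracket of vector fields on an open subset of `ℝ^d`:
`[V, W](x) = DW(x)(V(x)) − DV(x)(W(x))`. -/
noncomputable def lieBracketVF {d : ℕ} (V W : (Fin d → ℝ) → (Fin d → ℝ))
    (x : Fin d → ℝ) : Fin d → ℝ :=
  fderiv ℝ W x (V x) - fderiv ℝ V x (W x)

/-- If the vector fields `e_i(x) = H_i(x)⁻¹ • b_i` are positive rescalings of the
standard basis vectors `b_i` by `C¹` functions `H_i > 0` on an open set `U`, then
for `i ≠ j` the Lie bracket `[e_i, e_j](x)` lies in `span{e_i(x), e_j(x)}` for all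
`x ∈ U`. -/
theorem lieBracket_rescaledBasis_mem_span {d : ℕ} (U : Set (Fin d → ℝ))
    (hU : IsOpen U) (H : Fin d → (Fin d → ℝ) → ℝ)
    (hH : ∀ i, ContDiffOn ℝ 1 (H i) U)
    (hHpos : ∀ i, ∀ x ∈ U, 0 < H i x)
    (e : Fin d → (Fin d → ℝ) → (Fin d → ℝ))
    (he : ∀ i x, e i x = (H i x)⁻¹ • (Pi.single i (1 : ℝ) : Fin d → ℝ)) :
    ∀ x ∈ U, ∀ i j, i ≠ j →
      lieBracketVF (e i) (e j) x ∈ Submodule.span ℝ {e i x, e j x} := by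

  intro x hx i j hij
  -- differentiability of (H k)⁻¹ at x
  have hdiff : ∀ k, DifferentiableAt ℝ (fun y => (H k y)⁻¹) x := by
    intro k
    have h1 : DifferentiableAt ℝ (H k) x := by
      have := ((hH k).differentiableOn one_ne_zero).differentiableAt (hU.mem_nhds hx)
      exact this
    exact h1.inv (ne_of_gt (hHpos k x hx))
  -- the derivative of e k
  have hederiv : ∀ k, fderiv ℝ (e k) x
      = (fderiv ℝ (fun y => (H k y)⁻¹) x).smulRight (Pi.single k (1 : ℝ)) := by
    intro k
    have : e k = fun y => (H k y)⁻¹ • (Pi.single k (1 : ℝ) : Fin d → ℝ) := by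
      funext y; exact he k y
    rw [this, fderiv_smul_const (hdiff k)]
  -- basis vectors lie in the span
  have hb : ∀ k, (Pi.single k (1 : ℝ) : Fin d → ℝ)
      ∈ Submodule.span ℝ ({e i x, e j x} : Set (Fin d → ℝ)) → True := fun _ _ => trivial
  have hbi : (Pi.single i (1 : ℝ) : Fin d → ℝ)
      ∈ Submodule.span ℝ ({e i x, e j x} : Set (Fin d → ℝ)) := by
    have hmem : e i x ∈ Submodule.span ℝ ({e i x, e j x} : Set (Fin d → ℝ)) :=
      Submodule.subset_span (Set.mem_insert _ _)
    have heq : (Pi.single i (1 : ℝ) : Fin d → ℝ) = (H i x) • e i x := by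
      rw [he i x, smul_smul, mul_inv_cancel₀ (ne_of_gt (hHpos i x hx)), one_smul]
    rw [heq]; exact Submodule.smul_mem _ _ hmem
  have hbj : (Pi.single j (1 : ℝ) : Fin d → ℝ)
      ∈ Submodule.span ℝ ({e i x, e j x} : Set (Fin d → ℝ)) := by
    have hmem : e j x ∈ Submodule.span ℝ ({e i x, e j x} : Set (Fin d → ℝ)) :=
      Submodule.subset_span (Set.mem_insert_of_mem _ rfl)
    have heq : (Pi.single j (1 : ℝ) : Fin d → ℝ) = (H j x) • e j x := by
      rw [he j x, smul_smul, mul_inv_cancel₀ (ne_of_gt (hHpos j x hx)), one_smul]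
    rw [heq]; exact Submodule.smul_mem _ _ hmem
  unfold lieBracketVF
  rw [hederiv i, hederiv j]
  simp only [ContinuousLinearMap.smulRight_apply]
  exact Submodule.sub_mem _ (Submodule.smul_mem _ _ hbj) (Submodule.smul_mem _ _ hbi)
end

section
/- Fix σ > 0, let g : ℝ^d → ℝ^n be twice continuously differentiable, define u(x, z) = ½ ‖z‖² + (1/(2σ²)) ‖x − g(z)‖², and let f : ℝ^n → ℝ^d be differentiable with ∇_z u(x, f(x)) = 0 for all x ∈ ℝ^n. Let H(x) = Hess_z u(x, f(x)) denote the Hessian of u in z at z = f(x). Then for every x ∈ ℝ^n, H(x) ∘ f'(x) = (1/σ²) (g'(f(x)))ᵀ as linear maps from ℝ^n to ℝ^d. -/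
open InnerProductSpace ContinuousLinearMap

noncomputable def adjCLM (E F : Type*) [NormedAddCommGroup E] [InnerProductSpace ℝ E]
    [NormedAddCommGroup F] [InnerProductSpace ℝ F] [CompleteSpace E] [CompleteSpace F] :
    (E →L[ℝ] F) →L[ℝ] (F →L[ℝ] E) :=
  { toLinearMap :=
    { toFun := ContinuousLinearMap.adjoint
      map_add' := fun A B => map_add _ A B
      map_smul' := fun c A => by simp }
    cont := (ContinuousLinearMap.adjoint :
      (E →L[ℝ] F) ≃ₗᵢ⋆[ℝ] (F →L[ℝ] E)).continuous }

/-- For `u(x, z) = ½‖z‖² + (1/(2σ²))‖x − g(z)‖²` with `g` twice continuously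
differentiable, and `f` differentiable with `∇_z u(x, f(x)) = 0` for all `x`,
letting `H(x) = Hess_z u(x, f(x))`, we have `H(x) ∘ f'(x) = (1/σ²) (g'(f(x)))ᵀ`
as linear maps `ℝ^n → ℝ^d`. -/
theorem hessian_comp_encoder_deriv_eq {n d : ℕ} (σ : ℝ) (hσ : 0 < σ)
    (g : EuclideanSpace ℝ (Fin d) → EuclideanSpace ℝ (Fin n))
    (hg : ContDiff ℝ 2 g)
    (u : EuclideanSpace ℝ (Fin n) → EuclideanSpace ℝ (Fin d) → ℝ)
    (hu : ∀ x z, u x z = (1 / 2) * ‖z‖ ^ 2 + (1 / (2 * σ ^ 2)) * ‖x - g z‖ ^ 2)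
    (f : EuclideanSpace ℝ (Fin n) → EuclideanSpace ℝ (Fin d))
    (hf : Differentiable ℝ f)
    (hcrit : ∀ x, gradient (u x) (f x) = 0)
    (H : EuclideanSpace ℝ (Fin n) →
      EuclideanSpace ℝ (Fin d) →L[ℝ] EuclideanSpace ℝ (Fin d))
    (hH : ∀ x, H x = fderiv ℝ (fun z => gradient (u x) z) (f x)) :
    ∀ x, (H x).comp (fderiv ℝ f x)
        = (1 / σ ^ 2 : ℝ) • ContinuousLinearMap.adjoint (fderiv ℝ g (f x)) := by
  let E := EuclideanSpace ℝ (Fin n)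
  let D := EuclideanSpace ℝ (Fin d)
  have hσ2 : (σ : ℝ) ^ 2 ≠ 0 := by positivity
  have hgd : Differentiable ℝ g := hg.differentiable (by norm_num)
  have hg' : Differentiable ℝ (fderiv ℝ g) :=
    (hg.fderiv_right (m := 1) (by norm_num)).differentiable (by norm_num)
  set T : D → (E →L[ℝ] D) := fun z => adjCLM D E (fderiv ℝ g z) with hT_def
  have hT : Differentiable ℝ T := (adjCLM D E).differentiable.comp hg'
  -- gradient formula
  have grad : ∀ x z, HasGradientAt (u x) (z + (σ ^ 2)⁻¹ • (T z) (g z - x)) z := by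
    intro x z
    rw [hasGradientAt_iff_hasFDerivAt]
    have h1 : HasFDerivAt (fun z : D => inner ℝ z z : D → ℝ)
        ((fderivInnerCLM ℝ (z, z)).comp
          ((ContinuousLinearMap.id ℝ D).prod (ContinuousLinearMap.id ℝ D))) z :=
      (hasFDerivAt_id z).inner ℝ (hasFDerivAt_id z)
    have hw : HasFDerivAt (fun z : D => x - g z) (0 - fderiv ℝ g z) z :=
      (hasFDerivAt_const x z).sub (hgd z).hasFDerivAt
    have h2 : HasFDerivAt (fun z : D => (inner ℝ (x - g z) (x - g z) : ℝ))
        ((fderivInnerCLM ℝ (x - g z, x - g z)).comp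
          ((0 - fderiv ℝ g z).prod (0 - fderiv ℝ g z))) z :=
      hw.inner ℝ hw
    have hu' : HasFDerivAt (u x)
        ((1/2 : ℝ) • ((fderivInnerCLM ℝ (z, z)).comp
          ((ContinuousLinearMap.id ℝ D).prod (ContinuousLinearMap.id ℝ D)))
         + (1/(2*σ^2) : ℝ) • ((fderivInnerCLM ℝ (x - g z, x - g z)).comp
          ((0 - fderiv ℝ g z).prod (0 - fderiv ℝ g z)))) z := by
      have : u x = fun z => (1/2 : ℝ) * (inner ℝ z z : ℝ)
          + (1/(2*σ^2) : ℝ) * (inner ℝ (x - g z) (x - g z) : ℝ) := by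
        funext z
        rw [hu, real_inner_self_eq_norm_sq, real_inner_self_eq_norm_sq]
      rw [this]
      exact (h1.const_mul _).add (h2.const_mul _)
    refine hu'.congr_fderiv ?_
    ext h
    have hadj : (inner ℝ ((T z) (g z - x)) h : ℝ) = inner ℝ (g z - x) ((fderiv ℝ g z) h) :=
      ContinuousLinearMap.adjoint_inner_left _ _ _
    erw [InnerProductSpace.toDual_apply_apply]
    simp only [InnerProductSpace.toDual_apply_apply, ContinuousLinearMap.add_apply,
      ContinuousLinearMap.smul_apply, ContinuousLinearMap.comp_apply,
      ContinuousLinearMap.prod_apply, fderivInnerCLM_apply, ContinuousLinearMap.sub_apply,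
      ContinuousLinearMap.zero_apply, ContinuousLinearMap.id_apply, zero_sub,
      inner_neg_left, inner_neg_right, smul_eq_mul,
      inner_add_left, real_inner_smul_left, hadj]
    simp only [ContinuousLinearMap.neg_apply, inner_neg_left, inner_neg_right]
    rw [real_inner_comm h z, real_inner_comm ((fderiv ℝ g z) h) (x - g z),
        ← neg_sub x (g z), inner_neg_left]
    ring_nf
    rw [real_inner_comm ((fderiv ℝ g z) h) (x - g z)]
  have key : ∀ x z, gradient (u x) z = z + (σ ^ 2)⁻¹ • (T z) (g z - x) :=
    fun x z => (grad x z).gradient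
  -- the combined map
  set Ψ : E × D → D := fun p => p.2 + (σ ^ 2)⁻¹ • (T p.2) (g p.2 - p.1) with hΨ_def
  have hΨdiff : Differentiable ℝ Ψ := by
    apply differentiable_snd.add
    exact (((hT.comp differentiable_snd).clm_apply
      ((hgd.comp differentiable_snd).sub (differentiable_fst : Differentiable ℝ (Prod.fst : E × D → E)))).const_smul ((σ ^ 2)⁻¹ : ℝ))
  intro x₀
  set z₀ := f x₀
  set L := fderiv ℝ Ψ (x₀, z₀) with hL_def
  have hL : HasFDerivAt Ψ L (x₀, z₀) := (hΨdiff (x₀, z₀)).hasFDerivAt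
  -- Fact A : H x₀ = L ∘ inr
  have factA : H x₀ = L.comp (ContinuousLinearMap.inr ℝ E D) := by
    rw [hH x₀]
    have : (fun z => gradient (u x₀) z) = fun z => Ψ (x₀, z) := by
      funext z; rw [key]
    rw [this]
    have hcomp : HasFDerivAt (fun z => Ψ (x₀, z))
        (L.comp (ContinuousLinearMap.inr ℝ E D)) z₀ :=
      hL.comp z₀ (hasFDerivAt_prodMk_right x₀ z₀)
    exact hcomp.fderiv
  -- Fact B : L ∘ inl = -(σ^2)⁻¹ • T z₀
  have factB : L.comp (ContinuousLinearMap.inl ℝ E D) = (-(σ ^ 2)⁻¹ : ℝ) • T z₀ := by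
    have h1 : HasFDerivAt (fun x : E => Ψ (x, z₀))
        (L.comp (ContinuousLinearMap.inl ℝ E D)) x₀ :=
      HasFDerivAt.comp (g := Ψ) x₀ hL (hasFDerivAt_prodMk_left (𝕜 := ℝ) x₀ z₀)
    have h2 : HasFDerivAt (fun x : E => Ψ (x, z₀)) ((-(σ ^ 2)⁻¹ : ℝ) • T z₀) x₀ := by
      have : (fun x : E => Ψ (x, z₀))
          = fun x : E => (z₀ + (σ ^ 2)⁻¹ • (T z₀) (g z₀)) - (σ ^ 2)⁻¹ • (T z₀) x := by
        funext x
        simp only [hΨ_def, map_sub, smul_sub]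
        abel
      rw [this]
      have h2' : HasFDerivAt
          (fun x : E => (z₀ + (σ ^ 2)⁻¹ • (T z₀) (g z₀)) - (σ ^ 2)⁻¹ • (T z₀) x)
          (0 - (σ ^ 2)⁻¹ • T z₀) x₀ :=
        (hasFDerivAt_const _ x₀).sub (((T z₀).hasFDerivAt (x := x₀)).const_smul
          ((σ ^ 2)⁻¹ : ℝ))
      convert h2' using 1
      module
    exact h1.unique h2
  -- Fact C : L ∘ (id, f') = 0
  have factC : L.comp ((ContinuousLinearMap.id ℝ E).prod (fderiv ℝ f x₀)) = 0 := by
    have h1 : HasFDerivAt (fun x => Ψ (x, f x))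
        (L.comp ((ContinuousLinearMap.id ℝ E).prod (fderiv ℝ f x₀))) x₀ :=
      HasFDerivAt.comp (g := Ψ) x₀ hL (HasFDerivAt.prodMk (hasFDerivAt_id x₀) (hf x₀).hasFDerivAt)
    have h0 : (fun x => Ψ (x, f x)) = fun _ => (0 : D) := by
      funext x
      rw [hΨ_def]
      simpa using (key x (f x)).symm.trans (hcrit x)
    rw [h0] at h1
    exact h1.unique (hasFDerivAt_const 0 x₀)
  -- conclude
  ext h
  have e1 : L (h, (fderiv ℝ f x₀) h) = 0 := by
    have := congrArg (fun (A : E →L[ℝ] D) => A h) factC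
    simpa using this
  have e2 : L (h, (fderiv ℝ f x₀) h) = L (h, 0) + L (0, (fderiv ℝ f x₀) h) := by
    rw [← map_add]
    simp
  have e3 : L (h, 0) = (-(σ ^ 2)⁻¹ : ℝ) • (T z₀) h := by
    have := congrArg (fun (A : E →L[ℝ] D) => A h) factB
    simpa using this
  have e4 : (H x₀) ((fderiv ℝ f x₀) h) = L (0, (fderiv ℝ f x₀) h) := by
    rw [factA]; rfl
  have : L (0, (fderiv ℝ f x₀) h) = ((σ ^ 2)⁻¹ : ℝ) • (T z₀) h := by
    have := e2.symm.trans e1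
    rw [e3] at this
    linear_combination (norm := module) this
  simp only [ContinuousLinearMap.comp_apply, ContinuousLinearMap.smul_apply]
  rw [e4, this]
  rw [one_div]
  rfl
end

section
/- Let λ > 0 and σ > 0 be real numbers. Then a pair (w, v) ∈ ℝ² with v ≠ 0 satisfies the two stationarity equations of the one-dimensional linear FIVE loss, namely −(λ/σ²) v (1 − w v) + w v² = 0 and −(λ/σ²) w (1 − w v) + w² v + (σ² + λ) v − w = 0, if and only if (w, v) = (√λ, √λ/(σ² + λ)) or (w, v) = (−√λ, −√λ/(σ² + λ)). -/
/-- Characterization of the stationary points (with `v ≠ 0`) of the one-dimensional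
linear FIVE loss: `(w, v)` satisfies both stationarity equations iff
`(w, v) = (±√λ, ±√λ/(σ² + λ))` (same sign). -/
theorem five_1d_stationary_iff (lam σ : ℝ) (hlam : 0 < lam) (hσ : 0 < σ)
    (w v : ℝ) (hv : v ≠ 0) :
    (-(lam / σ ^ 2) * v * (1 - w * v) + w * v ^ 2 = 0 ∧
      -(lam / σ ^ 2) * w * (1 - w * v) + w ^ 2 * v + (σ ^ 2 + lam) * v - w = 0)
    ↔ ((w = Real.sqrt lam ∧ v = Real.sqrt lam / (σ ^ 2 + lam)) ∨
        (w = -Real.sqrt lam ∧ v = -(Real.sqrt lam / (σ ^ 2 + lam)))) := by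
  have hs2 : (Real.sqrt lam) ^ 2 = lam := Real.sq_sqrt hlam.le
  have hσ2 : (0:ℝ) < σ ^ 2 := by positivity
  have hA : (0:ℝ) < σ ^ 2 + lam := by positivity
  have hAne : σ ^ 2 + lam ≠ 0 := hA.ne'
  set s := Real.sqrt lam with hsdef
  constructor
  · rintro ⟨h1, h2⟩
    -- from h1: w*v*(σ²+lam) = lam
    have e1 : w * v * (σ ^ 2 + lam) = lam := by
      have h1' : v * (-(lam * (1 - w * v)) + σ ^ 2 * (w * v)) = 0 := by
        field_simp at h1
        nlinarith [h1]
      have := (mul_eq_zero.mp h1').resolve_left hv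
      nlinarith [this]
    -- from h2 and e1: w = (σ²+lam)*v
    have e2 : w = (σ ^ 2 + lam) * v := by
      have h2' : -(lam * (w * (1 - w * v))) + σ ^ 2 * (w ^ 2 * v + (σ ^ 2 + lam) * v - w) = 0 := by
        field_simp at h2
        nlinarith [h2]
      have key : σ ^ 2 * ((σ ^ 2 + lam) * ((σ ^ 2 + lam) * v - w)) = 0 := by
        linear_combination (σ ^ 2 + lam) * h2' - (σ ^ 2 + lam) * w * e1
      have := (mul_eq_zero.mp key).resolve_left hσ2.ne'
      have := (mul_eq_zero.mp this).resolve_left hAne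
      linarith
    have e3 : ((σ ^ 2 + lam) * v - s) * ((σ ^ 2 + lam) * v + s) = 0 := by
      linear_combination e1 - (σ ^ 2 + lam) * v * e2 - hs2
    rcases mul_eq_zero.mp e3 with h | h
    · left
      have hvv : v = s / (σ ^ 2 + lam) := by field_simp; linarith
      exact ⟨by rw [e2, hvv]; field_simp, hvv⟩
    · right
      have hvv : v = -(s / (σ ^ 2 + lam)) := by field_simp; linarith
      exact ⟨by rw [e2, hvv]; field_simp, hvv⟩
  · rintro (⟨hw, hvv⟩ | ⟨hw, hvv⟩) <;> subst hw <;> subst hvv <;>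
      constructor <;> field_simp <;> rw [← hs2] <;> ring
end

section
/- Let λ > 0 and σ > 0. If (w, v) ∈ ℝ² with v ≠ 0 satisfies −(λ/σ²) v (1 − w v) + w v² = 0, then w ≠ 0, w v = λ/(σ² + λ), and v = λ/(w(σ² + λ)). If in addition −(λ/σ²) w (1 − w v) + w² v + (σ² + λ) v − w = 0, then w² = λ. -/
/-- From the first stationarity equation of the one-dimensional linear FIVE loss
(with `v ≠ 0`) one obtains `w ≠ 0`, `w v = λ/(σ² + λ)` and `v = λ/(w(σ² + λ))`;
adding the second stationarity equation yields `w² = λ`. -/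
theorem five_1d_stationary_consequences (lam σ : ℝ) (hlam : 0 < lam) (hσ : 0 < σ)
    (w v : ℝ) (hv : v ≠ 0)
    (h1 : -(lam / σ ^ 2) * v * (1 - w * v) + w * v ^ 2 = 0) :
    (w ≠ 0 ∧ w * v = lam / (σ ^ 2 + lam) ∧ v = lam / (w * (σ ^ 2 + lam))) ∧
      ((-(lam / σ ^ 2) * w * (1 - w * v) + w ^ 2 * v + (σ ^ 2 + lam) * v - w = 0) →
        w ^ 2 = lam) := by
  have hσ2 : (σ : ℝ) ^ 2 ≠ 0 := by positivity
  have hsum : (0:ℝ) < σ ^ 2 + lam := by positivity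
  have hsum' : σ ^ 2 + lam ≠ 0 := ne_of_gt hsum
  have h1a : -(lam * v * (1 - w * v)) + w * v ^ 2 * σ ^ 2 = 0 := by
    field_simp at h1
    linarith [h1]
  have hfac : v * (w * v * (σ ^ 2 + lam) - lam) = 0 := by ring_nf; ring_nf at h1a; linarith
  have h1' : w * v * (σ ^ 2 + lam) = lam := by
    rcases mul_eq_zero.mp hfac with h | h
    · exact absurd h hv
    · linarith
  have hwv : w * v = lam / (σ ^ 2 + lam) := by
    field_simp
    linarith [h1']
  have hw : w ≠ 0 := by
    intro h
    rw [h] at h1'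
    simp at h1'
    exact (ne_of_gt hlam) h1'.symm
  have hveq : v = lam / (w * (σ ^ 2 + lam)) := by
    field_simp
    linarith [h1']
  refine ⟨⟨hw, hwv, hveq⟩, fun h2 => ?_⟩
  have h2a : -(lam * w * (1 - w * v)) + (w ^ 2 * v + (σ ^ 2 + lam) * v - w) * σ ^ 2 = 0 := by
    field_simp at h2
    linarith [h2]
  rw [hveq] at h2a
  field_simp at h2a
  have key : w * σ ^ 2 * (σ ^ 2 + lam) ^ 2 * (lam - w ^ 2) = 0 := by
    linear_combination (w * (σ ^ 2 + lam)) * h2a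
  have key2 : lam - w ^ 2 = 0 := by
    rcases mul_eq_zero.mp key with h | h
    · rcases mul_eq_zero.mp h with h' | h'
      · rcases mul_eq_zero.mp h' with h'' | h''
        · exact absurd h'' hw
        · exact absurd h'' hσ2
      · exact absurd h' (pow_ne_zero 2 hsum')
    · exact h
  linarith
end
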